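/- arXiv:2110.02331 — 4 statements merged into one kernel-verified Lean document; each statement's English description precedes it below -/
import Mathlib

section
/- Let S be a metric space, Ω a set, f : S → Ω → S, Σ ⊆ S, and s̄ > 0 a real number. Assume that dist(f(s, ω), s) ≤ s̄ for every s ∈ Σ and every ω ∈ Ω. Define the s̄-critical state set D := {s ∈ Σ : infDist(s, Σᶜ) ≤ s̄}. Then Σ is robustly forward invariant for f (i.e., ∀ s ∈ Σ, ∀ ω ∈ Ω, f(s, ω) ∈ Σ) if and only if for every s ∈ D and every ω ∈ Ω, f(s, ω) ∈ Σ. -/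
theorem stmt_4 {S : Type*} [MetricSpace S] {Ω : Type*} (f : S → Ω → S)
    (Sig : Set S) (sbar : ℝ) (hsbar : 0 < sbar)
    (hbound : ∀ s ∈ Sig, ∀ ω : Ω, dist (f s ω) s ≤ sbar) :
    (∀ s ∈ Sig, ∀ ω : Ω, f s ω ∈ Sig) ↔
    (∀ s ∈ {s ∈ Sig | Metric.infDist s Sigᶜ ≤ sbar}, ∀ ω : Ω, f s ω ∈ Sig) := by
  constructor
  · intro h s hs ω; exact h s hs.1 ω
  · intro h s hs ω
    by_cases hd : Metric.infDist s Sigᶜ ≤ sbar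
    · exact h s ⟨hs, hd⟩ ω
    · by_contra hnot
      have : Metric.infDist s Sigᶜ ≤ dist s (f s ω) :=
        Metric.infDist_le_dist_of_mem hnot
      rw [dist_comm] at this
      exact hd (this.trans (hbound s hs ω))
end

section
/- Let f : S → Ω → S, let P(A) := {s ∈ A : ∀ ω ∈ Ω, f(s, ω) ∈ A} be the pruning operator, and let Σ ⊆ S. If A ⊆ Σ is robustly forward invariant for f, then A ⊆ P^[k](Σ) for every natural number k, where P^[k] denotes the k-fold iterate of P. Moreover, the iterates are antitone: P^[k+1](Σ) ⊆ P^[k](Σ) ⊆ Σ for all k. -/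
theorem stmt_9 {S Ω : Type*} (f : S → Ω → S)
    (P : Set S → Set S) (hP : ∀ A : Set S, P A = {s ∈ A | ∀ ω : Ω, f s ω ∈ A})
    (Sig : Set S) (A : Set S) (hA : A ⊆ Sig)
    (hinv : ∀ s ∈ A, ∀ ω : Ω, f s ω ∈ A) :
    (∀ k : ℕ, A ⊆ P^[k] Sig) ∧
    (∀ k : ℕ, P^[k + 1] Sig ⊆ P^[k] Sig ∧ P^[k] Sig ⊆ Sig) := by
  have hPsub : ∀ B : Set S, P B ⊆ B := by
    intro B s hs; rw [hP] at hs; exact hs.1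
  have hmem : ∀ B : Set S, A ⊆ B → A ⊆ P B := by
    intro B hAB s hs
    rw [hP]
    exact ⟨hAB hs, fun ω => hAB (hinv s hs ω)⟩
  have h1 : ∀ k : ℕ, A ⊆ P^[k] Sig := by
    intro k
    induction k with
    | zero => simpa using hA
    | succ n ih =>
      rw [Function.iterate_succ_apply']
      exact hmem _ ih
  refine ⟨h1, fun k => ⟨?_, ?_⟩⟩
  · rw [Function.iterate_succ_apply']; exact hPsub _
  · induction k with
    | zero => simp
    | succ n ih =>
      rw [Function.iterate_succ_apply']
      exact (hPsub _).trans ih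
end

section
/- Let f : S → Ω → S, let P(A) := {s ∈ A : ∀ ω ∈ Ω, f(s, ω) ∈ A} be the pruning operator, and let Σ ⊆ S be a finite set. Then there exists a natural number k such that P^[k+1](Σ) = P^[k](Σ); for any such k, the stationary set P^[k](Σ) is robustly forward invariant for f and equals the union of all robustly forward invariant subsets of Σ (i.e., it is the greatest robustly forward invariant subset of Σ). -/
theorem stmt_10 {S Ω : Type*} (f : S → Ω → S)
    (P : Set S → Set S) (hP : ∀ A : Set S, P A = {s ∈ A | ∀ ω : Ω, f s ω ∈ A})
    (Sig : Set S) (hfin : Sig.Finite) :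
    (∃ k : ℕ, P^[k + 1] Sig = P^[k] Sig) ∧
    (∀ k : ℕ, P^[k + 1] Sig = P^[k] Sig →
      (∀ s ∈ P^[k] Sig, ∀ ω : Ω, f s ω ∈ P^[k] Sig) ∧
      P^[k] Sig = ⋃₀ {A : Set S | A ⊆ Sig ∧ ∀ s ∈ A, ∀ ω : Ω, f s ω ∈ A}) := by
  have hsub : ∀ A : Set S, P A ⊆ A := by
    intro A s hs
    rw [hP] at hs
    exact hs.1
  have hsubSig : ∀ n : ℕ, P^[n] Sig ⊆ Sig := by
    intro n
    induction n with
    | zero => simp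
    | succ n ih =>
      rw [Function.iterate_succ_apply']
      exact (hsub _).trans ih
  have hfinN : ∀ n : ℕ, (P^[n] Sig).Finite := fun n => hfin.subset (hsubSig n)
  have hstep : ∀ n : ℕ, P^[n + 1] Sig ⊆ P^[n] Sig := by
    intro n
    rw [Function.iterate_succ_apply']
    exact hsub _
  -- existence of stationary k
  have hex : ∃ k : ℕ, P^[k + 1] Sig = P^[k] Sig := by
    by_contra h
    push_neg at h
    have hlt : ∀ n : ℕ, (P^[n + 1] Sig).ncard < (P^[n] Sig).ncard := by
      intro n
      exact Set.ncard_lt_ncard (lt_of_le_of_ne (hstep n) (h n)) (hfinN n)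
    have key : ∀ n : ℕ, (P^[n] Sig).ncard + n ≤ (P^[0] Sig).ncard := by
      intro n
      induction n with
      | zero => simp
      | succ n ih =>
        have := hlt n
        omega
    have := key ((P^[0] Sig).ncard + 1)
    omega
  refine ⟨hex, ?_⟩
  intro k hk
  have hinv : ∀ s ∈ P^[k] Sig, ∀ ω : Ω, f s ω ∈ P^[k] Sig := by
    intro s hs ω
    have : s ∈ P^[k + 1] Sig := hk ▸ hs
    rw [Function.iterate_succ_apply', hP] at this
    exact this.2 ω
  refine ⟨hinv, ?_⟩
  apply subset_antisymm
  · intro s hs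
    exact ⟨P^[k] Sig, ⟨hsubSig k, hinv⟩, hs⟩
  · -- every invariant subset of Sig is contained in every iterate
    intro s hs
    obtain ⟨A, ⟨hASig, hAinv⟩, hsA⟩ := hs
    have : ∀ n : ℕ, A ⊆ P^[n] Sig := by
      intro n
      induction n with
      | zero => simpa using hASig
      | succ n ih =>
        rw [Function.iterate_succ_apply', hP]
        intro x hx
        exact ⟨ih hx, fun ω => ih (hAinv x hx ω)⟩
    exact this k hsA
end

section
/- Let f̂ : S → U → Ω̂ → S be scenario dynamics and let π̂ : S → Ω₁ → U and π : S → Ω₂ → U be two scenario testing policies. Suppose that for every A ⊆ S and every s ∈ A the critical feasible action sets agree: U'(s, A) ∩ U_π̂(s) = U'(s, A) ∩ U_π(s). Then for every Σ ⊆ S and every natural number k, the iterated closed-loop pruning operators agree: P_π̂^[k](Σ) = P_π^[k](Σ). Consequently, if Σ is finite, the stationary sets of the two pruning iterations (the safe sets characterized under the two policies) coincide. -/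
lemma stab_aux {α : Type*} (f : α → α) (x : α) (k : ℕ)
    (h : f^[k + 1] x = f^[k] x) : ∀ m, f^[k + m] x = f^[k] x := by
  intro m
  induction m with
  | zero => rfl
  | succ n ih =>
    have : k + (n + 1) = (k + n) + 1 := by ring
    rw [this, Function.iterate_succ_apply', ih, ← Function.iterate_succ_apply' f k x, h]

theorem stmt_13 {S U Ωhat Ω₁ Ω₂ : Type*}
    (fhat : S → U → Ωhat → S)
    (pihat : S → Ω₁ → U) (pi : S → Ω₂ → U)
    (Phat P : Set S → Set S)
    (hPhat : ∀ A : Set S,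
      Phat A = {s ∈ A | ∀ ω₁ : Ω₁, ∀ ωhat : Ωhat, fhat s (pihat s ω₁) ωhat ∈ A})
    (hP : ∀ A : Set S,
      P A = {s ∈ A | ∀ ω₂ : Ω₂, ∀ ωhat : Ωhat, fhat s (pi s ω₂) ωhat ∈ A})
    (hconsensus : ∀ A : Set S, ∀ s ∈ A,
      {u : U | ∃ ωhat : Ωhat, fhat s u ωhat ∉ A} ∩ {u : U | ∃ ω₁ : Ω₁, pihat s ω₁ = u} =
      {u : U | ∃ ωhat : Ωhat, fhat s u ωhat ∉ A} ∩ {u : U | ∃ ω₂ : Ω₂, pi s ω₂ = u}) :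
    (∀ Sig : Set S, ∀ k : ℕ, Phat^[k] Sig = P^[k] Sig) ∧
    (∀ Sig : Set S, Sig.Finite →
      ∀ k k' : ℕ, Phat^[k + 1] Sig = Phat^[k] Sig → P^[k' + 1] Sig = P^[k'] Sig →
        Phat^[k] Sig = P^[k'] Sig) := by
  have hfun : Phat = P := by
    funext A
    rw [hPhat, hP]
    ext s
    simp only [Set.mem_setOf_eq]
    refine and_congr_right fun hs => ?_
    rw [← not_iff_not]
    push_neg
    have hc := Set.ext_iff.mp (hconsensus A s hs)
    constructor
    · rintro ⟨ω₁, ωhat, h⟩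
      obtain ⟨⟨ωhat', h'⟩, ⟨ω₂, heq⟩⟩ :=
        (hc (pihat s ω₁)).mp ⟨⟨ωhat, h⟩, ⟨ω₁, rfl⟩⟩
      exact ⟨ω₂, ωhat', by rwa [heq]⟩
    · rintro ⟨ω₂, ωhat, h⟩
      obtain ⟨⟨ωhat', h'⟩, ⟨ω₁, heq⟩⟩ :=
        (hc (pi s ω₂)).mpr ⟨⟨ωhat, h⟩, ⟨ω₂, rfl⟩⟩
      exact ⟨ω₁, ωhat', by rwa [heq]⟩
  subst hfun
  refine ⟨fun _ _ => rfl, ?_⟩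
  intro Sig _ k k' h1 h2
  rcases le_total k k' with h | h
  · obtain ⟨m, rfl⟩ := Nat.exists_eq_add_of_le h
    exact (stab_aux Phat Sig k h1 m).symm
  · obtain ⟨m, rfl⟩ := Nat.exists_eq_add_of_le h
    exact stab_aux Phat Sig k' h2 m
end
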